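/- For every z ∈ ℂ ∖ ℝ, the Weyl–Titchmarsh function satisfies the partial fraction expansion M(z)/z = Σ_{λ∈σ} 1/( λ γ_λ² (λ − z) ), where σ is the set of roots of W (all real and simple) and, for λ ∈ σ, γ_λ² = Σ_n ω_n φ₊(λ,x_n)² + 2λ Σ_n υ_n φ₊(λ,x_n)². -/

import Mathlib

/-!
Propagating `(φ, φ')` across the nodes with the transfer matrices (determinant one) and the jump
matrices makes `W` and the numerator `P` of `M = P / W` polynomials in `z`. For two spectral
parameters the determinant of the propagated data telescopes, each node contributing
`(q_n(ζ) - q_n(ζ')) φ(ζ, x_n) φ(ζ', x_n)` with `q_n(ζ) = ζ ω_n + ζ² υ_n`; at a zero `λ` of `W`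
this factors `W(z) = (λ - z) S_λ(z)`. Along the real solution at `λ` the product `φ φ'` can only
grow across a gap and drops by `λ (ω_n + λ υ_n) φ(x_n)²` at a node, while it starts positive and
ends nonpositive; hence `λ Σ (ω_n + 2λυ_n) φ(x_n)² > 0`, so `λ ≠ 0` and `S_λ(λ) ≠ 0`. Thus the
zeros of `W` are simple and `deg P ≤ deg W = |σ|`, and since `P(0) = 0`, interpolation at
`{0} ∪ σ` gives `P(z) = z Σ_λ P(λ) S_λ(z) / (λ S_λ(λ))`. The residues are identified with
`1 / (λ γ_λ²)` through the explicit eigenfunction `e^{t/2} + Σ J_n K(t - x_n)`, `K` the causal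
fundamental solution.
-/

open scoped BigOperators

/-- Transfer matrix across an interval of length `d` for `-f'' + (1/4) f = 0`. -/
noncomputable def Tmat (d : ℝ) : Matrix (Fin 2) (Fin 2) ℂ :=
  !![Complex.cosh ((d : ℂ) / 2), 2 * Complex.sinh ((d : ℂ) / 2);
     (1 / 2) * Complex.sinh ((d : ℂ) / 2), Complex.cosh ((d : ℂ) / 2)]

/-- Interface matrix at a point carrying weight `w` and dipole `v`. -/
noncomputable def Omat (w v : ℝ) (z : ℂ) : Matrix (Fin 2) (Fin 2) ℂ :=
  !![1, 0; -(z * (w : ℂ) + z ^ 2 * (v : ℂ)), 1]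

/-- The value `(φ₋(z, x_N+), φ₋'(z, x_N+))` obtained by propagating the initial data
`(e^{x_0/2}, (1/2) e^{x_0/2})` through all the point interactions (0-indexed data). -/
noncomputable def transVec (N : ℕ) (x w v : ℕ → ℝ) (z : ℂ) : Fin 2 → ℂ :=
  Matrix.mulVec
    ((((List.range (N - 1)).reverse.map
        (fun j => Omat (w (j + 1)) (v (j + 1)) z * Tmat (x (j + 1) - x j))).prod)
      * Omat (w 0) (v 0) z)
    ![Complex.exp ((x 0 : ℂ) / 2), (1 / 2) * Complex.exp ((x 0 : ℂ) / 2)]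

/-- The Wronskian polynomial `W(z)` of the generalized spectral problem
`-f'' + (1/4) f = z ω f + z² υ f` (`W ≡ 1` when `N = 0`). -/
noncomputable def Wron (N : ℕ) (x w v : ℕ → ℝ) (z : ℂ) : ℂ :=
  if N = 0 then 1
  else Complex.exp (-(x (N - 1) : ℂ) / 2) *
    (transVec N x w v z 1 + (1 / 2) * transVec N x w v z 0)

/-- The Weyl--Titchmarsh function `M(z)`. -/
noncomputable def WeylM (N : ℕ) (x w v : ℕ → ℝ) (z : ℂ) : ℂ :=
  Complex.exp ((x (N - 1) : ℂ) / 2) *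
    ((1 / 2) * transVec N x w v z 0 - transVec N x w v z 1) / Wron N x w v z

/-- `f` (with distributional derivative represented by `f'`) is a solution at `z` of the
generalized spectral problem `-f'' + (1/4) f = z ω f + z² υ f` with
`ω = Σ_{n<N} w n δ_{x n}`, `υ = Σ_{n<N} v n δ_{x n}`: it is continuous, twice differentiable
away from the points `x n` with `f'' = (1/4) f` there, and the one-sided limits of `f'` at
each `x n` exist and satisfy the jump condition
`f'(x_n+) - f'(x_n-) = -(z w_n + z² v_n) f (x_n)`. -/
def IsSol (N : ℕ) (x w v : ℕ → ℝ) (z : ℂ) (f f' : ℝ → ℂ) : Prop :=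
  Continuous f ∧
  (∀ t : ℝ, (∀ n < N, t ≠ x n) →
    HasDerivAt f (f' t) t ∧ HasDerivAt f' ((1 / 4) * f t) t) ∧
  (∀ n < N, ∃ L R : ℂ,
    Filter.Tendsto f' (nhdsWithin (x n) (Set.Iio (x n))) (nhds L) ∧
    Filter.Tendsto f' (nhdsWithin (x n) (Set.Ioi (x n))) (nhds R) ∧
    R - L = -(z * (w n : ℂ) + z ^ 2 * (v n : ℂ)) * f (x n))

open Polynomial Real Filter Topology
open scoped Matrix

theorem sub_le_sum_sub {a b : ℕ → ℝ} {k : ℕ} (h : ∀ n < k, b n ≤ a (n + 1)) :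
    a 0 - b k ≤ ∑ n ∈ Finset.range (k + 1), (a n - b n) := by
  induction k with
  | zero => simp
  | succ k ih =>
    rw [Finset.sum_range_succ]
    linarith [ih fun n hn => h n (by omega), h k (by omega)]

section PartialFractions

variable {K ι : Type*} [Field K] {W P : K[X]} {σ : Finset ι} {r : ι → K} {S : ι → K[X]}

theorem natDegree_X_mul_eq_of_eq {a : K} {T : K[X]} (h : W = (C a - X) * T) :
    (X * T).natDegree = W.natDegree := by
  rcases eq_or_ne T 0 with rfl | hT
  · simp [h]
  rw [h, show C a - X = -(X - C a) by ring, neg_mul, natDegree_neg,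
    natDegree_mul X_ne_zero hT, natDegree_mul (X_sub_C_ne_zero a) hT, natDegree_X,
    natDegree_X_sub_C]

theorem natDegree_le_card_of_factors [IsAlgClosed K] (hW : W ≠ 0) (hr : Function.Injective r)
    (hroot : ∀ a, W.IsRoot a → ∃ i ∈ σ, r i = a)
    (hfac : ∀ i ∈ σ, W = (C (r i) - X) * S i) (hS : ∀ i ∈ σ, (S i).eval (r i) ≠ 0) :
    W.natDegree ≤ σ.card := by
  classical
  rw [← IsAlgClosed.card_roots_eq_natDegree, Finset.card_def, ← Multiset.card_map r]
  refine Multiset.card_le_card (Multiset.le_iff_count.2 fun a => ?_)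
  rw [count_roots]
  by_cases ha : W.IsRoot a
  · obtain ⟨i, hi, rfl⟩ := hroot a ha
    have hW' : W = (X - C (r i)) * -S i := by rw [hfac i hi]; ring
    rw [Multiset.count_map_eq_count' _ _ hr, Multiset.count_eq_one_of_mem σ.nodup hi, hW',
      rootMultiplicity_mul (hW' ▸ hW), rootMultiplicity_X_sub_C_self,
      rootMultiplicity_eq_zero (by simpa using hS i hi)]
  · rw [rootMultiplicity_eq_zero ha]
    exact Nat.zero_le _

theorem X_mul_sum_eq_of_factors (hr : Function.Injective r) (hr0 : ∀ i ∈ σ, r i ≠ 0)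
    (hfac : ∀ i ∈ σ, W = (C (r i) - X) * S i) (hS : ∀ i ∈ σ, (S i).eval (r i) ≠ 0)
    (hW : W.natDegree ≤ σ.card) (hP : P.natDegree ≤ σ.card) (hP0 : P.eval 0 = 0) :
    X * ∑ i ∈ σ, C (P.eval (r i) / (r i * (S i).eval (r i))) * S i = P := by
  classical
  have hvanish : ∀ i ∈ σ, ∀ j ∈ σ, j ≠ i → (S j).eval (r i) = 0 := by
    intro i hi j hj hji
    have h := congrArg (eval (r i)) ((hfac j hj).symm.trans (hfac i hi))
    simp only [eval_mul, eval_sub, eval_C, eval_X, sub_self, zero_mul] at h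
    exact (mul_eq_zero.1 h).resolve_left (sub_ne_zero.2 (hr.ne hji))
  refine (sub_eq_zero.1 <| eq_zero_of_natDegree_lt_card_of_eval_eq_zero' _
    (insert 0 (σ.image r)) (fun a ha => ?_) ?_)
  · rcases Finset.mem_insert.1 ha with rfl | ha
    · simp [hP0]
    obtain ⟨i, hi, rfl⟩ := Finset.mem_image.1 ha
    rw [eval_sub, eval_mul, eval_X, eval_finsetSum, Finset.sum_eq_single_of_mem i hi
      fun j hj hji => by rw [eval_mul, hvanish i hi j hj hji, mul_zero], eval_mul, eval_C]
    field_simp [hr0 i hi, hS i hi]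
    ring
  · have h0 : 0 ∉ σ.image r := fun h => by
      obtain ⟨i, hi, h0⟩ := Finset.mem_image.1 h
      exact hr0 i hi h0
    rw [Finset.card_insert_of_notMem h0, Finset.card_image_of_injective _ hr, Finset.mul_sum]
    refine Nat.lt_succ_of_le ((natDegree_sub_le _ _).trans (max_le ?_ hP))
    refine natDegree_sum_le_of_forall_le _ _ fun i hi => ?_
    rw [mul_left_comm]
    exact (natDegree_C_mul_le _ _).trans ((natDegree_X_mul_eq_of_eq (hfac i hi)).trans_le hW)

theorem eval_div_eval_div_eq_sum (hr : Function.Injective r) (hr0 : ∀ i ∈ σ, r i ≠ 0)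
    (hfac : ∀ i ∈ σ, W = (C (r i) - X) * S i) (hS : ∀ i ∈ σ, (S i).eval (r i) ≠ 0)
    (hW : W.natDegree ≤ σ.card) (hP : P.natDegree ≤ σ.card) (hP0 : P.eval 0 = 0)
    {z : K} (hz : z ≠ 0) (hWz : W.eval z ≠ 0) :
    P.eval z / W.eval z / z = ∑ i ∈ σ, P.eval (r i) / (r i * (S i).eval (r i) * (r i - z)) := by
  have hPz := congrArg (eval z) (X_mul_sum_eq_of_factors hr hr0 hfac hS hW hP hP0)
  rw [eval_mul, eval_X] at hPz
  rw [← hPz, mul_div_assoc, mul_div_cancel_left₀ _ hz, eval_finsetSum, Finset.sum_div]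
  refine Finset.sum_congr rfl fun i hi => ?_
  have hWz' : W.eval z = (r i - z) * (S i).eval z := by
    rw [hfac i hi, eval_mul, eval_sub, eval_C, eval_X]
  have hSz : (S i).eval z ≠ 0 := fun h => hWz (by rw [hWz', h, mul_zero])
  rw [eval_mul, eval_C, hWz', mul_div_mul_right _ _ hSz, div_div]

end PartialFractions

noncomputable section

namespace PointInteraction

section Chain

variable {A B : Type*} [CommRing A] [CommRing B]

def jump (q : A) (p : A × A) : A × A := (p.1, p.2 - q * p.1)

theorem jump_det (a b : A) (p q : A × A) :
    (jump a p).1 * (jump b q).2 - (jump a p).2 * (jump b q).1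
      = p.1 * q.2 - p.2 * q.1 + (a - b) * p.1 * q.1 := by
  simp only [jump]; ring

theorem jump_eq_zero_iff {q : A} {p : A × A} : jump q p = 0 ↔ p = 0 := by
  simp only [jump, Prod.ext_iff, Prod.fst_zero, Prod.snd_zero]
  constructor <;> rintro ⟨h1, h2⟩ <;> simp_all

variable [Algebra ℝ A] [Algebra ℝ B]

def transfer (d : ℝ) (p : A × A) : A × A :=
  (cosh (d / 2) • p.1 + (2 * sinh (d / 2)) • p.2, (sinh (d / 2) / 2) • p.1 + cosh (d / 2) • p.2)

def coupling (w v : ℝ) (ζ : A) : A := w • ζ + v • ζ ^ 2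

theorem transfer_transfer (s d : ℝ) (p : A × A) :
    transfer s (transfer d p) = transfer (s + d) p := by
  simp only [transfer, add_div, cosh_add, sinh_add, smul_add, smul_smul]
  ext <;> module

theorem transfer_zero (p : A × A) : transfer 0 p = p := by
  simp [transfer]

theorem transfer_det (d : ℝ) (p q : A × A) :
    (transfer d p).1 * (transfer d q).2 - (transfer d p).2 * (transfer d q).1
      = p.1 * q.2 - p.2 * q.1 := by
  have hcs := congrArg (algebraMap ℝ A) (cosh_sq_sub_sinh_sq (d / 2))
  have hsinh : algebraMap ℝ A (sinh (d / 2)) = 2 * algebraMap ℝ A (sinh (d / 2) / 2) := by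
    rw [← map_ofNat (algebraMap ℝ A) 2, ← map_mul, mul_div_cancel₀ _ two_ne_zero]
  simp only [map_sub, map_pow, map_one] at hcs
  simp only [transfer, Algebra.smul_def, map_mul, map_ofNat]
  linear_combination (p.1 * q.2 - p.2 * q.1) * hcs
    + (p.1 * q.2 - p.2 * q.1) * algebraMap ℝ A (sinh (d / 2)) * hsinh

theorem coupling_sub_coupling (w v : ℝ) (ζ ζ' : A) :
    coupling w v ζ - coupling w v ζ' = (ζ - ζ') * (algebraMap ℝ A w + v • (ζ + ζ')) := by
  simp only [coupling, Algebra.smul_def]; ring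

variable (x w v : ℕ → ℝ)

/-- `(φ₋, φ₋')(ζ, x_n-)`, where `φ₋(ζ, t) = e^{t/2}` left of all nodes, for `ζ` in any `ℝ`-algebra:
`ℝ`, `ℂ`, or `ℂ[X]` for polynomials in `z`. `rightData` is the same at `x_n+`. -/
def leftData (ζ : A) : ℕ → A × A
  | 0 => (algebraMap ℝ A (exp (x 0 / 2)), algebraMap ℝ A (exp (x 0 / 2) / 2))
  | n + 1 => transfer (x (n + 1) - x n) (jump (coupling (w n) (v n) ζ) (leftData ζ n))

def rightData (ζ : A) (n : ℕ) : A × A := jump (coupling (w n) (v n) ζ) (leftData x w v ζ n)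

theorem leftData_succ (ζ : A) (n : ℕ) :
    leftData x w v ζ (n + 1) = transfer (x (n + 1) - x n) (rightData x w v ζ n) := rfl

def crossSum (ζ ζ' : A) (k : ℕ) : A :=
  ∑ n ∈ Finset.range k,
    (algebraMap ℝ A (w n) + v n • (ζ + ζ')) * (leftData x w v ζ n).1 * (leftData x w v ζ' n).1

theorem crossSum_succ (ζ ζ' : A) (k : ℕ) :
    crossSum x w v ζ ζ' (k + 1) = crossSum x w v ζ ζ' k
      + (algebraMap ℝ A (w k) + v k • (ζ + ζ')) * (leftData x w v ζ k).1
        * (leftData x w v ζ' k).1 :=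
  Finset.sum_range_succ _ _

theorem rightData_det (ζ ζ' : A) (k : ℕ) :
    (rightData x w v ζ k).1 * (rightData x w v ζ' k).2
        - (rightData x w v ζ k).2 * (rightData x w v ζ' k).1
      = (ζ - ζ') * crossSum x w v ζ ζ' (k + 1) := by
  induction k with
  | zero =>
    rw [rightData, rightData, jump_det, crossSum_succ, coupling_sub_coupling]
    simp only [leftData, crossSum, Finset.sum_range_zero]
    ring
  | succ k ih =>
    rw [rightData, rightData, jump_det, leftData_succ, leftData_succ, transfer_det, ih,
      coupling_sub_coupling, crossSum_succ _ _ _ _ _ (k + 1), leftData_succ, leftData_succ]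
    ring

variable {x w v}

theorem map_leftData (f : A →ₐ[ℝ] B) (ζ : A) (n : ℕ) :
    Prod.map f f (leftData x w v ζ n) = leftData x w v (f ζ) n := by
  induction n with
  | zero => simp [leftData]
  | succ n ih =>
    rw [leftData, leftData, ← ih]
    simp [transfer, jump, coupling]

theorem map_rightData (f : A →ₐ[ℝ] B) (ζ : A) (n : ℕ) :
    Prod.map f f (rightData x w v ζ n) = rightData x w v (f ζ) n := by
  rw [rightData, rightData, ← map_leftData]
  simp [jump, coupling]

theorem map_crossSum (f : A →ₐ[ℝ] B) (ζ ζ' : A) (k : ℕ) :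
    f (crossSum x w v ζ ζ' k) = crossSum x w v (f ζ) (f ζ') k := by
  simp [crossSum, ← map_leftData f]

end Chain

theorem Tmat_mulVec (d : ℝ) (p : ℂ × ℂ) :
    Tmat d *ᵥ ![p.1, p.2] = ![(transfer d p).1, (transfer d p).2] := by
  ext i
  fin_cases i <;>
    simp [Tmat, transfer, Matrix.mulVec, dotProduct, Complex.real_smul, -mul_eq_mul_right_iff]
  ring

theorem Omat_mulVec (w v : ℝ) (z : ℂ) (p : ℂ × ℂ) :
    Omat w v z *ᵥ ![p.1, p.2] = ![(jump (coupling w v z) p).1, (jump (coupling w v z) p).2] := by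
  ext i
  fin_cases i <;> simp [Omat, jump, coupling, Matrix.mulVec, dotProduct, Complex.real_smul]
  ring

theorem transVec_eq (N : ℕ) (x w v : ℕ → ℝ) (z : ℂ) :
    transVec N x w v z = ![(rightData x w v z (N - 1)).1, (rightData x w v z (N - 1)).2] := by
  suffices h : ∀ k, (((List.range k).reverse.map
      (fun j => Omat (w (j + 1)) (v (j + 1)) z * Tmat (x (j + 1) - x j))).prod
        * Omat (w 0) (v 0) z)
      *ᵥ ![Complex.exp ((x 0 : ℂ) / 2), (1 / 2) * Complex.exp ((x 0 : ℂ) / 2)]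
      = ![(rightData x w v z k).1, (rightData x w v z k).2] from h (N - 1)
  intro k
  induction k with
  | zero =>
    have h0 : ![Complex.exp ((x 0 : ℂ) / 2), (1 / 2) * Complex.exp ((x 0 : ℂ) / 2)]
        = ![(leftData x w v z 0).1, (leftData x w v z 0).2] := by
      simp [leftData, Complex.ofReal_exp]; ring_nf
    simp only [List.range_zero, List.reverse_nil, List.map_nil, List.prod_nil, one_mul, h0,
      Omat_mulVec, rightData]
  | succ k ih =>
    rw [List.range_succ, List.reverse_append, List.map_append, List.prod_append,
      List.reverse_singleton, List.map_singleton, List.prod_singleton, mul_assoc,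
      ← Matrix.mulVec_mulVec, ← Matrix.mulVec_mulVec, ih, Tmat_mulVec,
      Omat_mulVec]
    rfl

variable {N : ℕ} {x w v : ℕ → ℝ}

theorem rightData_ofReal (lam : ℝ) (n : ℕ) :
    rightData x w v (lam : ℂ) n = Prod.map (↑) (↑) (rightData x w v lam n) := by
  simpa using (map_rightData Complex.ofRealAm lam n).symm

theorem crossSum_ofReal (lam : ℝ) (k : ℕ) :
    crossSum x w v (lam : ℂ) lam k = ((crossSum x w v lam lam k : ℝ) : ℂ) := by
  simpa using (map_crossSum Complex.ofRealAm lam lam k).symm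

theorem eval_rightData (z : ℂ) (n : ℕ) :
    Prod.map (eval z) (eval z) (rightData x w v (X : ℂ[X]) n) = rightData x w v z n := by
  simpa using map_rightData ((aeval z : ℂ[X] →ₐ[ℂ] ℂ).restrictScalars ℝ : ℂ[X] →ₐ[ℝ] ℂ) X n

variable (N x w v) in
/-- `(φ₋, φ₋')(z, x_N+)` as polynomials in the spectral parameter `z`. -/
def endData : ℂ[X] × ℂ[X] := rightData x w v (X : ℂ[X]) (N - 1)

variable (N x w v) in
def wronskianPoly : ℂ[X] :=
  C (Complex.exp (-(x (N - 1) : ℂ) / 2)) * ((endData N x w v).2 + C (1 / 2) * (endData N x w v).1)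

variable (N x w v) in
def numeratorPoly : ℂ[X] :=
  C (Complex.exp ((x (N - 1) : ℂ) / 2)) * (C (1 / 2) * (endData N x w v).1 - (endData N x w v).2)

theorem eval_endData (z : ℂ) :
    Prod.map (eval z) (eval z) (endData N x w v) = rightData x w v z (N - 1) :=
  eval_rightData z (N - 1)

theorem Wron_eq_eval (hN : N ≠ 0) (z : ℂ) :
    Wron N x w v z = (wronskianPoly N x w v).eval z := by
  have h := eval_endData (N := N) (x := x) (w := w) (v := v) z
  simp only [Prod.ext_iff, Prod.map_fst, Prod.map_snd] at h
  simp [Wron, hN, wronskianPoly, transVec_eq, h]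

theorem WeylM_eq_div (hN : N ≠ 0) (z : ℂ) :
    WeylM N x w v z = (numeratorPoly N x w v).eval z / (wronskianPoly N x w v).eval z := by
  have h := eval_endData (N := N) (x := x) (w := w) (v := v) z
  simp only [Prod.ext_iff, Prod.map_fst, Prod.map_snd] at h
  simp [WeylM, ← Wron_eq_eval hN, numeratorPoly, transVec_eq, h]

theorem eval_endData_ofReal (lam : ℝ) :
    (endData N x w v).1.eval (lam : ℂ) = (rightData x w v lam (N - 1)).1 ∧
      (endData N x w v).2.eval (lam : ℂ) = (rightData x w v lam (N - 1)).2 := by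
  have h := eval_endData (N := N) (x := x) (w := w) (v := v) lam
  rw [rightData_ofReal] at h
  simpa [Prod.ext_iff] using h

/-- At a real zero `lam` of the Wronskian, `φ₋(lam, ·)` is a multiple of `e^{-t/2}` beyond the
last node; this is the hypothesis `heig` below. -/
theorem rightData_snd_eq_of_isRoot {lam : ℝ}
    (h : (wronskianPoly N x w v).IsRoot lam) :
    (rightData x w v lam (N - 1)).2 = -(rightData x w v lam (N - 1)).1 / 2 := by
  obtain ⟨h1, h2⟩ := eval_endData_ofReal (N := N) (x := x) (w := w) (v := v) lam
  simp only [IsRoot, wronskianPoly, eval_mul, eval_C, eval_add, h1, h2, mul_eq_zero,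
    Complex.exp_ne_zero, false_or] at h
  have : (((rightData x w v lam (N - 1)).2 + (rightData x w v lam (N - 1)).1 / 2 : ℝ) : ℂ)
      = 0 := by
    push_cast; linear_combination h
  rw [Complex.ofReal_eq_zero] at this
  linarith

theorem coupling_X_ne_zero {w v : ℝ} (h : w ≠ 0 ∨ v ≠ 0) : coupling w v (X : ℂ[X]) ≠ 0 := by
  intro h0
  have h1 := congrArg (coeff · 1) h0
  have h2 := congrArg (coeff · 2) h0
  simp [coupling, coeff_X_pow, Algebra.smul_def] at h1 h2
  tauto

theorem natDegree_coupling_X_pos {w v : ℝ} (h : w ≠ 0 ∨ v ≠ 0) :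
    0 < (coupling w v (X : ℂ[X])).natDegree :=
  natDegree_pos_iff_degree_pos.2 <|
    degree_pos_of_root (a := 0) (coupling_X_ne_zero h) (by simp [coupling])

theorem natDegree_real_smul {r : ℝ} (hr : r ≠ 0) (p : ℂ[X]) :
    (r • p).natDegree = p.natDegree := by
  rw [Algebra.smul_def, Polynomial.algebraMap_apply, natDegree_C_mul (by simpa using hr)]

theorem natDegree_transfer {d : ℝ} (hd : d ≠ 0) {p : ℂ[X] × ℂ[X]}
    (hp : p.1.natDegree < p.2.natDegree) :
    (transfer d p).1.natDegree = p.2.natDegree ∧ (transfer d p).2.natDegree ≤ p.2.natDegree := by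
  have hs : 2 * sinh (d / 2) ≠ 0 := by simp [sinh_eq_zero, hd]
  constructor
  · rw [transfer, natDegree_add_eq_right_of_natDegree_lt] <;> rw [natDegree_real_smul hs]
    exact (natDegree_smul_le _ _).trans_lt hp
  · exact natDegree_add_le_of_degree_le ((natDegree_smul_le _ _).trans hp.le)
      (natDegree_smul_le _ _)

theorem natDegree_lt_natDegree_jump {q : ℂ[X]} (hq : 0 < q.natDegree) {p : ℂ[X] × ℂ[X]}
    (hp1 : p.1 ≠ 0) (hp : p.2.natDegree ≤ p.1.natDegree) :
    (jump q p).1.natDegree < (jump q p).2.natDegree := by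
  have hq0 : q ≠ 0 := ne_zero_of_natDegree_gt hq
  have hdeg : (q * p.1).natDegree = q.natDegree + p.1.natDegree := natDegree_mul hq0 hp1
  simp only [jump]
  rw [natDegree_sub_eq_right_of_natDegree_lt (by omega), hdeg]
  omega

theorem natDegree_endData_fst_lt (hN : N ≠ 0)
    (hx : StrictMonoOn x (Set.Iio N)) (hwv : ∀ n < N, w n ≠ 0 ∨ v n ≠ 0) :
    (endData N x w v).1.natDegree < (endData N x w v).2.natDegree := by
  suffices ∀ k < N, (rightData x w v (X : ℂ[X]) k).1.natDegree
      < (rightData x w v (X : ℂ[X]) k).2.natDegree from this (N - 1) (by omega)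
  intro k
  induction k with
  | zero =>
    intro h0
    refine natDegree_lt_natDegree_jump (natDegree_coupling_X_pos (hwv 0 h0)) ?_ ?_ <;>
      simp [leftData]
  | succ k ih =>
    intro hk
    have hd : x (k + 1) - x k ≠ 0 :=
      sub_ne_zero.2 (hx (by simp; omega) (by simpa using hk) (by omega)).ne'
    have ih := ih (by omega)
    obtain ⟨h1, h2⟩ := natDegree_transfer hd ih
    rw [rightData, leftData_succ]
    refine natDegree_lt_natDegree_jump (natDegree_coupling_X_pos (hwv _ hk)) ?_ (by omega)
    exact ne_zero_of_natDegree_gt (h1 ▸ ih)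

theorem transfer_eq_zero_iff {d : ℝ} {p : ℝ × ℝ} : transfer d p = 0 ↔ p = 0 := by
  refine ⟨fun h => ?_, fun h => by simp [h, transfer]⟩
  rw [← transfer_zero p, ← neg_add_cancel d, ← transfer_transfer, h]
  simp [transfer]

theorem fst_mul_snd_le_transfer {d : ℝ} (hd : 0 ≤ d) (p : ℝ × ℝ) :
    p.1 * p.2 ≤ (transfer d p).1 * (transfer d p).2 := by
  have hc := cosh_sq_sub_sinh_sq (d / 2)
  have hs : 0 ≤ sinh (d / 2) := sinh_nonneg_iff.2 (by linarith)
  have hcs : 0 ≤ cosh (d / 2) - sinh (d / 2) := by rw [cosh_sub_sinh]; positivity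
  have expand : (transfer d p).1 * (transfer d p).2 - p.1 * p.2
      = sinh (d / 2) / 2 * (sinh (d / 2) * (p.1 + 2 * p.2) ^ 2
        + (cosh (d / 2) - sinh (d / 2)) * (p.1 ^ 2 + 4 * p.2 ^ 2)) := by
    simp only [transfer, smul_eq_mul]
    linear_combination p.1 * p.2 * hc
  have : 0 ≤ (transfer d p).1 * (transfer d p).2 - p.1 * p.2 := by rw [expand]; positivity
  linarith

theorem leftData_ne_zero (lam : ℝ) (n : ℕ) : leftData x w v lam n ≠ 0 := by
  induction n with
  | zero => simp [leftData, Prod.ext_iff, exp_ne_zero]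
  | succ n ih =>
    rwa [leftData, Ne, transfer_eq_zero_iff, jump_eq_zero_iff]

theorem rightData_ne_zero (lam : ℝ) (n : ℕ) : rightData x w v lam n ≠ 0 := by
  rw [rightData, Ne, jump_eq_zero_iff]
  exact leftData_ne_zero lam n

theorem rightData_fst_ne_zero {lam : ℝ} {n : ℕ}
    (heig : (rightData x w v lam n).2 = -(rightData x w v lam n).1 / 2) :
    (rightData x w v lam n).1 ≠ 0 := by
  intro h
  exact rightData_ne_zero lam n (Prod.ext h (by simp [heig, h]))

theorem mul_crossSum_pos (hN : N ≠ 0) (hx : StrictMonoOn x (Set.Iio N))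
    (hv : ∀ n < N, 0 ≤ v n) {lam : ℝ}
    (heig : (rightData x w v lam (N - 1)).2 = -(rightData x w v lam (N - 1)).1 / 2) :
    0 < lam * crossSum x w v lam lam N := by
  set a := fun n => (leftData x w v lam n).1 * (leftData x w v lam n).2
  set b := fun n => (rightData x w v lam n).1 * (rightData x w v lam n).2
  have hgap : ∀ n < N - 1, b n ≤ a (n + 1) := fun n hn =>
    fst_mul_snd_le_transfer (sub_nonneg.2 (hx.monotoneOn (by simp; omega) (by simp; omega)
      (by omega))) _
  have hterm : ∀ n ∈ Finset.range N, a n - b n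
      ≤ lam * ((algebraMap ℝ ℝ (w n) + v n • (lam + lam))
        * (leftData x w v lam n).1 * (leftData x w v lam n).1) := by
    intro n hn
    have := mul_nonneg (hv n (Finset.mem_range.1 hn)) (sq_nonneg (lam * (leftData x w v lam n).1))
    simp only [a, b, rightData, jump, coupling, smul_eq_mul, Algebra.algebraMap_self,
      RingHom.id_apply]
    nlinarith
  have ha0 : 0 < a 0 := by simp [a, leftData]; positivity
  have hbN : b (N - 1) ≤ 0 := by
    simp only [b, heig]; nlinarith [sq_nonneg (rightData x w v lam (N - 1)).1]
  have htele := sub_le_sum_sub hgap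
  rw [Nat.sub_add_cancel (Nat.one_le_iff_ne_zero.2 hN)] at htele
  rw [crossSum, Finset.mul_sum]
  linarith [Finset.sum_le_sum hterm]

/-- The fundamental solution of `f'' - f/4 = δ` supported in `[0, ∞)`, and its derivative. -/
def causalKernel (s : ℝ) : ℝ := 2 * sinh (max s 0 / 2)

def causalKernelDeriv (s : ℝ) : ℝ := if 0 < s then cosh (s / 2) else 0

theorem causalKernel_of_nonpos {s : ℝ} (hs : s ≤ 0) : causalKernel s = 0 := by
  simp [causalKernel, max_eq_right hs]

theorem causalKernel_of_nonneg {s : ℝ} (hs : 0 ≤ s) : causalKernel s = 2 * sinh (s / 2) := by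
  simp [causalKernel, max_eq_left hs]

theorem continuous_causalKernel : Continuous causalKernel := by
  unfold causalKernel; fun_prop

theorem hasDerivAt_causalKernel {s : ℝ} (hs : s ≠ 0) :
    HasDerivAt causalKernel (causalKernelDeriv s) s ∧
      HasDerivAt causalKernelDeriv (causalKernel s / 4) s := by
  rcases hs.lt_or_gt with hs | hs
  · have h1 : causalKernel =ᶠ[𝓝 s] fun _ => 0 :=
      (eventually_lt_nhds hs).mono fun t ht => causalKernel_of_nonpos ht.le
    have h2 : causalKernelDeriv =ᶠ[𝓝 s] fun _ => 0 :=
      (eventually_lt_nhds hs).mono fun t ht => if_neg ht.not_gt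
    rw [causalKernelDeriv, if_neg hs.not_gt, causalKernel_of_nonpos hs.le, zero_div]
    exact ⟨(hasDerivAt_const s 0).congr_of_eventuallyEq h1,
      (hasDerivAt_const s 0).congr_of_eventuallyEq h2⟩
  · have h1 : causalKernel =ᶠ[𝓝 s] fun t => 2 * sinh (t / 2) :=
      (eventually_gt_nhds hs).mono fun t ht => causalKernel_of_nonneg ht.le
    have h2 : causalKernelDeriv =ᶠ[𝓝 s] fun t => cosh (t / 2) :=
      (eventually_gt_nhds hs).mono fun t ht => if_pos ht
    rw [causalKernelDeriv, if_pos hs, causalKernel_of_nonneg hs.le]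
    exact ⟨(((hasDerivAt_id' s).div_const 2).sinh.const_mul 2).congr_deriv (by ring)
      |>.congr_of_eventuallyEq h1,
      ((hasDerivAt_id' s).div_const 2).cosh.congr_deriv (by ring) |>.congr_of_eventuallyEq h2⟩

theorem tendsto_causalKernelDeriv_sub_left (a : ℝ) :
    Tendsto (fun t => causalKernelDeriv (t - a)) (𝓝[<] a) (𝓝 0) :=
  tendsto_const_nhds.congr' <| eventually_nhdsWithin_of_forall fun _ ht =>
    (if_neg (not_lt.2 (sub_nonpos.2 (le_of_lt ht)))).symm

theorem tendsto_causalKernelDeriv_sub_right (a : ℝ) :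
    Tendsto (fun t => causalKernelDeriv (t - a)) (𝓝[>] a) (𝓝 1) := by
  have h : Tendsto (fun t => cosh ((t - a) / 2)) (𝓝[>] a) (𝓝 1) := by
    have : Continuous fun t => cosh ((t - a) / 2) := by fun_prop
    simpa using (this.tendsto a).mono_left nhdsWithin_le_nhds
  exact h.congr' <| eventually_nhdsWithin_of_forall fun _ ht => (if_pos (sub_pos.2 ht)).symm

variable (N x) in
/-- The solution of `f'' - f/4 = Σ J n δ_{x n}` equal to `e^{t/2}` left of all nodes. -/
def jumpSolution (J : ℕ → ℝ) (t : ℝ) : ℝ :=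
  exp (t / 2) + ∑ n ∈ Finset.range N, J n * causalKernel (t - x n)

variable (N x) in
def jumpSolutionDeriv (J : ℕ → ℝ) (t : ℝ) : ℝ :=
  exp (t / 2) / 2 + ∑ n ∈ Finset.range N, J n * causalKernelDeriv (t - x n)

theorem continuous_jumpSolution (J : ℕ → ℝ) : Continuous (jumpSolution N x J) := by
  have := continuous_causalKernel
  unfold jumpSolution
  fun_prop

theorem hasDerivAt_jumpSolution (J : ℕ → ℝ) {t : ℝ} (ht : ∀ n < N, t ≠ x n) :
    HasDerivAt (jumpSolution N x J) (jumpSolutionDeriv N x J t) t ∧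
      HasDerivAt (jumpSolutionDeriv N x J) (jumpSolution N x J t / 4) t := by
  have hK : ∀ n ∈ Finset.range N,
      HasDerivAt (fun s => causalKernel (s - x n)) (causalKernelDeriv (t - x n)) t ∧
        HasDerivAt (fun s => causalKernelDeriv (s - x n)) (causalKernel (t - x n) / 4) t := by
    intro n hn
    obtain ⟨h1, h2⟩ := hasDerivAt_causalKernel (sub_ne_zero.2 (ht n (Finset.mem_range.1 hn)))
    exact ⟨h1.comp_sub_const t (x n), h2.comp_sub_const t (x n)⟩
  have hexp : HasDerivAt (fun s => exp (s / 2)) (exp (t / 2) / 2) t :=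
    ((hasDerivAt_id' t).div_const 2).exp.congr_deriv (by ring)
  refine ⟨hexp.add (HasDerivAt.fun_sum fun n hn => (hK n hn).1.const_mul (J n)), ?_⟩
  refine ((hexp.div_const 2).add
    (HasDerivAt.fun_sum fun n hn => (hK n hn).2.const_mul (J n))).congr_deriv ?_
  simp only [jumpSolution, add_div, Finset.sum_div, mul_div_assoc]
  ring

theorem tendsto_jumpSolutionDeriv (hx : Set.InjOn x (Set.Iio N)) (J : ℕ → ℝ) {n : ℕ}
    (hn : n < N) :
    Tendsto (jumpSolutionDeriv N x J) (𝓝[<] x n) (𝓝 (jumpSolutionDeriv N x J (x n))) ∧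
      Tendsto (jumpSolutionDeriv N x J) (𝓝[>] x n) (𝓝 (jumpSolutionDeriv N x J (x n) + J n)) := by
  classical
  set g := fun t => exp (t / 2) / 2
    + ∑ m ∈ (Finset.range N).erase n, J m * causalKernelDeriv (t - x m)
  have hsplit : jumpSolutionDeriv N x J = fun t => g t + J n * causalKernelDeriv (t - x n) := by
    ext t
    rw [jumpSolutionDeriv, ← Finset.add_sum_erase _ _ (Finset.mem_range.2 hn)]
    ring
  have hg : ContinuousAt g (x n) := by
    refine (by fun_prop : Continuous fun t => exp (t / 2) / 2).continuousAt.add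
      (tendsto_finsetSum _ fun m hm => ContinuousAt.mul continuousAt_const ?_)
    obtain ⟨hmn, hm⟩ := Finset.mem_erase.1 hm
    have hne : x n - x m ≠ 0 := sub_ne_zero.2 fun h =>
      hmn (hx (Set.mem_Iio.2 (Finset.mem_range.1 hm)) (Set.mem_Iio.2 hn) h.symm)
    exact ((hasDerivAt_causalKernel hne).2.comp_sub_const (x n) (x m)).continuousAt
  have hval : jumpSolutionDeriv N x J (x n) = g (x n) := by
    simp [hsplit, causalKernelDeriv]
  rw [hval, hsplit]
  constructor
  · simpa using (hg.tendsto.mono_left nhdsWithin_le_nhds).add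
      ((tendsto_causalKernelDeriv_sub_left (x n)).const_mul (J n))
  · simpa using (hg.tendsto.mono_left nhdsWithin_le_nhds).add
      ((tendsto_causalKernelDeriv_sub_right (x n)).const_mul (J n))

theorem isSol_jumpSolution (hx : Set.InjOn x (Set.Iio N)) {lam : ℝ} {J : ℕ → ℝ}
    (hJ : ∀ n < N, J n = -(lam * w n + lam ^ 2 * v n) * jumpSolution N x J (x n)) (a : ℝ) :
    IsSol N x w v lam (fun t => ↑(a * jumpSolution N x J t))
      (fun t => ↑(a * jumpSolutionDeriv N x J t)) := by
  refine ⟨?_, fun t ht => ?_, fun n hn => ?_⟩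
  · exact Complex.continuous_ofReal.comp (continuous_const.mul (continuous_jumpSolution J))
  · obtain ⟨h1, h2⟩ := hasDerivAt_jumpSolution J ht
    exact ⟨(h1.const_mul a).ofReal_comp,
      (h2.const_mul a).ofReal_comp.congr_deriv (by push_cast; ring)⟩
  · obtain ⟨hl, hr⟩ := tendsto_jumpSolutionDeriv hx J hn
    refine ⟨_, _, (Complex.continuous_ofReal.tendsto _).comp (hl.const_mul a),
      (Complex.continuous_ofReal.tendsto _).comp (hr.const_mul a), ?_⟩
    rw [hJ n hn]
    push_cast
    ring

theorem jumpSolution_eq_of_le_of_le (J : ℕ → ℝ) {k : ℕ} {t : ℝ} (hk : k ≤ N)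
    (hleft : ∀ m < k, x m ≤ t) (hright : ∀ m, k ≤ m → m < N → t ≤ x m) :
    jumpSolution N x J t
      = exp (t / 2) + ∑ m ∈ Finset.range k, J m * (2 * sinh ((t - x m) / 2)) := by
  rw [jumpSolution, ← Finset.sum_range_add_sum_Ico _ hk, Finset.sum_eq_zero (s := Finset.Ico k N),
    add_zero]
  · exact congrArg _ (Finset.sum_congr rfl fun m hm => by
      rw [causalKernel_of_nonneg (sub_nonneg.2 (hleft m (Finset.mem_range.1 hm)))])
  · intro m hm
    obtain ⟨h1, h2⟩ := Finset.mem_Ico.1 hm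
    rw [causalKernel_of_nonpos (sub_nonpos.2 (hright m h1 h2)), mul_zero]

theorem transfer_leftData_fst (lam : ℝ) (k : ℕ) (t : ℝ) :
    (transfer (t - x k) (leftData x w v lam k)).1 = exp (t / 2)
      + ∑ m ∈ Finset.range k,
        ((rightData x w v lam m).2 - (leftData x w v lam m).2) * (2 * sinh ((t - x m) / 2)) := by
  induction k with
  | zero =>
    have h := cosh_add_sinh ((t - x 0) / 2)
    simp only [transfer, leftData, smul_eq_mul, Algebra.algebraMap_self, RingHom.id_apply,
      Finset.sum_range_zero, add_zero]
    rw [show t / 2 = (t - x 0) / 2 + x 0 / 2 by ring, exp_add, ← h]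
    ring
  | succ k ih =>
    rw [Finset.sum_range_succ, ← add_assoc, ← ih, leftData_succ, transfer_transfer,
      show t - x (k + 1) + (x (k + 1) - x k) = t - x k by ring]
    simp only [transfer, rightData, jump, smul_eq_mul]
    ring

variable (N x w v) in
/-- `φ₋(lam, ·)`, an eigenfunction when `lam` is an eigenvalue. -/
def eigenfunction (lam : ℝ) : ℝ → ℝ :=
  jumpSolution N x (fun m => (rightData x w v lam m).2 - (leftData x w v lam m).2)

variable (N x w v) in
def decayCoeff (lam : ℝ) : ℝ := exp (x (N - 1) / 2) * (rightData x w v lam (N - 1)).1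

theorem decayCoeff_ne_zero {lam : ℝ}
    (heig : (rightData x w v lam (N - 1)).2 = -(rightData x w v lam (N - 1)).1 / 2) :
    decayCoeff N x w v lam ≠ 0 :=
  mul_ne_zero (exp_ne_zero _) (rightData_fst_ne_zero heig)

theorem eigenfunction_node (hx : StrictMonoOn x (Set.Iio N)) (lam : ℝ) {n : ℕ} (hn : n < N) :
    eigenfunction N x w v lam (x n) = (leftData x w v lam n).1 := by
  rw [eigenfunction, jumpSolution_eq_of_le_of_le _ hn.le
      (fun m hm => (hx (by simp; omega) (by simpa using hn) hm).le)
      (fun m hm hmN => hx.monotoneOn (by simpa using hn) (by simpa using hmN) hm),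
    ← transfer_leftData_fst, sub_self, transfer_zero]

theorem eigenfunction_of_le (hN : N ≠ 0) (hx : StrictMonoOn x (Set.Iio N)) {lam : ℝ}
    (heig : (rightData x w v lam (N - 1)).2 = -(rightData x w v lam (N - 1)).1 / 2)
    {t : ℝ} (ht : x (N - 1) ≤ t) :
    eigenfunction N x w v lam t = decayCoeff N x w v lam * exp (-t / 2) := by
  obtain ⟨M, rfl⟩ : ∃ M, N = M + 1 := ⟨N - 1, by omega⟩
  simp only [Nat.add_sub_cancel] at heig ht
  rw [eigenfunction, jumpSolution_eq_of_le_of_le _ le_rfl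
      (fun m hm => (hx.monotoneOn (by simpa using hm) (by simp) (by omega)).trans ht)
      (fun m hm hmN => by omega),
    ← transfer_leftData_fst, leftData_succ, transfer_transfer,
    show t - x (M + 1) + (x (M + 1) - x M) = t - x M by ring]
  have h := cosh_sub_sinh ((t - x M) / 2)
  simp only [transfer, smul_eq_mul, heig, decayCoeff, Nat.add_sub_cancel]
  rw [show -t / 2 = -((t - x M) / 2) - x M / 2 by ring, exp_sub, ← h]
  field_simp
  ring

theorem isSol_eigenfunction (hx : StrictMonoOn x (Set.Iio N)) (lam a : ℝ) :
    IsSol N x w v lam (fun t => ↑(a * eigenfunction N x w v lam t))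
      (fun t => ↑(a * jumpSolutionDeriv N x
        (fun m => (rightData x w v lam m).2 - (leftData x w v lam m).2) t)) := by
  refine isSol_jumpSolution hx.injOn (fun n hn => ?_) a
  change _ = _ * eigenfunction N x w v lam (x n)
  rw [eigenfunction_node hx lam hn]
  simp only [rightData, jump, coupling, smul_eq_mul]
  ring

theorem gamma_mul_decayCoeff_sq (hN : N ≠ 0) (hx : StrictMonoOn x (Set.Iio N)) {lam : ℝ}
    (heig : (rightData x w v lam (N - 1)).2 = -(rightData x w v lam (N - 1)).1 / 2) {γ : ℂ}
    (hγ : ∀ f f' : ℝ → ℂ, IsSol N x w v (lam : ℂ) f f' →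
      (∀ t : ℝ, x (N - 1) ≤ t → f t = Complex.exp (-(t : ℂ) / 2)) →
      γ = (∑ n ∈ Finset.range N, (w n : ℂ) * f (x n) ^ 2)
        + 2 * (lam : ℂ) * ∑ n ∈ Finset.range N, (v n : ℂ) * f (x n) ^ 2) :
    γ * (decayCoeff N x w v lam : ℂ) ^ 2 = (crossSum x w v lam lam N : ℝ) := by
  have hc := decayCoeff_ne_zero heig
  set a := (decayCoeff N x w v lam)⁻¹
  have hsol := isSol_eigenfunction (w := w) (v := v) hx lam a
  have htail : ∀ t : ℝ, x (N - 1) ≤ t → ((a * eigenfunction N x w v lam t : ℝ) : ℂ)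
      = Complex.exp (-(t : ℂ) / 2) := by
    intro t ht
    rw [eigenfunction_of_le hN hx heig ht, ← mul_assoc, inv_mul_cancel₀ hc, one_mul,
      Complex.ofReal_exp]
    push_cast
    ring_nf
  rw [hγ _ _ hsol htail, crossSum, Complex.ofReal_sum, add_mul, Finset.sum_mul, mul_assoc,
    Finset.sum_mul, Finset.mul_sum, ← Finset.sum_add_distrib]
  refine Finset.sum_congr rfl fun n hn => ?_
  rw [eigenfunction_node hx lam (Finset.mem_range.1 hn)]
  have ha : (a : ℂ) * decayCoeff N x w v lam = 1 := by exact_mod_cast inv_mul_cancel₀ hc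
  simp only [smul_eq_mul, Algebra.algebraMap_self, RingHom.id_apply]
  push_cast
  linear_combination (↑(w n) + 2 * ↑lam * ↑(v n)) * (leftData x w v lam n).1 ^ 2
    * ((a : ℂ) * decayCoeff N x w v lam + 1) * ha

theorem leftData_zero (n : ℕ) :
    leftData x w v (0 : ℝ) n = (exp (x n / 2), exp (x n / 2) / 2) := by
  induction n with
  | zero => simp [leftData]
  | succ n ih =>
    have h := cosh_add_sinh ((x (n + 1) - x n) / 2)
    rw [leftData, ih]
    simp only [transfer, jump, coupling, smul_eq_mul, ne_eq, OfNat.ofNat_ne_zero,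
      not_false_eq_true, zero_pow, Prod.mk.injEq]
    rw [show x (n + 1) / 2 = (x (n + 1) - x n) / 2 + x n / 2 by ring, exp_add, ← h]
    constructor <;> ring

theorem eval_numeratorPoly_zero : (numeratorPoly N x w v).eval 0 = 0 := by
  have h := eval_endData (N := N) (x := x) (w := w) (v := v) 0
  rw [← Complex.ofReal_zero, rightData_ofReal, rightData, leftData_zero] at h
  simp only [Prod.ext_iff, Prod.map_fst, Prod.map_snd, jump, coupling, smul_zero, zero_add, ne_eq,
    OfNat.ofNat_ne_zero, not_false_eq_true, zero_pow, zero_mul, sub_zero, Complex.ofReal_zero] at h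
  simp only [numeratorPoly, eval_mul, eval_C, eval_sub, h.1, h.2]
  push_cast
  ring

theorem eval_numeratorPoly_ofReal {lam : ℝ}
    (heig : (rightData x w v lam (N - 1)).2 = -(rightData x w v lam (N - 1)).1 / 2) :
    (numeratorPoly N x w v).eval (lam : ℂ) = decayCoeff N x w v lam := by
  obtain ⟨h1, h2⟩ := eval_endData_ofReal (N := N) (x := x) (w := w) (v := v) lam
  simp only [numeratorPoly, decayCoeff, eval_mul, eval_C, eval_sub, h1, h2, heig]
  push_cast
  ring

theorem natDegree_numeratorPoly_le (hN : N ≠ 0) (hx : StrictMonoOn x (Set.Iio N))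
    (hwv : ∀ n < N, w n ≠ 0 ∨ v n ≠ 0) :
    (numeratorPoly N x w v).natDegree ≤ (wronskianPoly N x w v).natDegree := by
  have h := natDegree_endData_fst_lt hN hx hwv
  have hhalf : (C (1 / 2 : ℂ) * (endData N x w v).1).natDegree < (endData N x w v).2.natDegree :=
    (natDegree_C_mul_le _ _).trans_lt h
  rw [numeratorPoly, wronskianPoly, natDegree_C_mul (Complex.exp_ne_zero _),
    natDegree_C_mul (Complex.exp_ne_zero _), natDegree_sub_eq_right_of_natDegree_lt hhalf,
    natDegree_add_eq_left_of_natDegree_lt hhalf]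

variable (N x w v) in
/-- The quotient of the Wronskian by `lam - z` at an eigenvalue `lam`. -/
def cofactorPoly (lam : ℝ) : ℂ[X] :=
  C ((decayCoeff N x w v lam : ℂ)⁻¹) * crossSum x w v (C (lam : ℂ)) X N

theorem wronskianPoly_eq_mul_cofactorPoly (hN : N ≠ 0) {lam : ℝ}
    (heig : (rightData x w v lam (N - 1)).2 = -(rightData x w v lam (N - 1)).1 / 2) :
    wronskianPoly N x w v = (C (lam : ℂ) - X) * cofactorPoly N x w v lam := by
  have hdet := rightData_det x w v (C (lam : ℂ)) (X : ℂ[X]) (N - 1)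
  have hR := map_rightData (Algebra.ofId ℝ ℂ[X]) lam (N - 1) (x := x) (w := w) (v := v)
  simp only [Algebra.ofId_apply, Polynomial.algebraMap_apply, Complex.coe_algebraMap] at hR
  rw [← hR, Nat.sub_add_cancel (Nat.one_le_iff_ne_zero.2 hN)] at hdet
  simp only [Prod.map_fst, Prod.map_snd, Algebra.ofId_apply, Polynomial.algebraMap_apply,
    Complex.coe_algebraMap, heig] at hdet
  have hu := rightData_fst_ne_zero heig
  have hk : C ((decayCoeff N x w v lam : ℂ)⁻¹) * C ((rightData x w v lam (N - 1)).1 : ℂ)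
      = C (Complex.exp (-(x (N - 1) : ℂ) / 2)) := by
    rw [← C_mul, decayCoeff]
    congr 1
    push_cast
    rw [mul_inv, mul_assoc, inv_mul_cancel₀ (by exact_mod_cast hu), mul_one, ← Complex.exp_neg,
      neg_div]
  have hhalf : C ((-(rightData x w v lam (N - 1)).1 / 2 : ℝ) : ℂ)
      = -(C ((rightData x w v lam (N - 1)).1 : ℂ) * C (1 / 2)) := by
    rw [← C_mul, ← C_neg]; push_cast; ring_nf
  rw [cofactorPoly, wronskianPoly, endData, ← hk]
  linear_combination C ((decayCoeff N x w v lam : ℂ)⁻¹) * hdet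
    + C ((decayCoeff N x w v lam : ℂ)⁻¹) * (rightData x w v X (N - 1)).1 * hhalf

theorem eval_cofactorPoly_self (lam : ℝ) :
    (cofactorPoly N x w v lam).eval (lam : ℂ)
      = (decayCoeff N x w v lam : ℂ)⁻¹ * (crossSum x w v lam lam N : ℝ) := by
  have h := map_crossSum ((aeval (lam : ℂ) : ℂ[X] →ₐ[ℂ] ℂ).restrictScalars ℝ : ℂ[X] →ₐ[ℝ] ℂ)
    (C (lam : ℂ)) X N (x := x) (w := w) (v := v)
  simp only [AlgHom.coe_restrictScalars', coe_aeval_eq_eval, eval_C, eval_X] at h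
  rw [cofactorPoly, eval_mul, eval_C, h, crossSum_ofReal]

theorem eval_cofactorPoly_self_ne_zero (hN : N ≠ 0) (hx : StrictMonoOn x (Set.Iio N))
    (hv : ∀ n < N, 0 ≤ v n) {lam : ℝ}
    (heig : (rightData x w v lam (N - 1)).2 = -(rightData x w v lam (N - 1)).1 / 2) :
    (cofactorPoly N x w v lam).eval (lam : ℂ) ≠ 0 := by
  rw [eval_cofactorPoly_self]
  exact mul_ne_zero (inv_ne_zero (by exact_mod_cast decayCoeff_ne_zero heig))
    (by exact_mod_cast right_ne_zero_of_mul (mul_crossSum_pos hN hx hv heig).ne')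

theorem eval_numeratorPoly_div_eq (hN : N ≠ 0) (hx : StrictMonoOn x (Set.Iio N)) {lam : ℝ}
    (heig : (rightData x w v lam (N - 1)).2 = -(rightData x w v lam (N - 1)).1 / 2) {γ : ℂ}
    (hγ : ∀ f f' : ℝ → ℂ, IsSol N x w v (lam : ℂ) f f' →
      (∀ t : ℝ, x (N - 1) ≤ t → f t = Complex.exp (-(t : ℂ) / 2)) →
      γ = (∑ n ∈ Finset.range N, (w n : ℂ) * f (x n) ^ 2)
        + 2 * (lam : ℂ) * ∑ n ∈ Finset.range N, (v n : ℂ) * f (x n) ^ 2) (z : ℂ) :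
    (numeratorPoly N x w v).eval (lam : ℂ)
        / (lam * (cofactorPoly N x w v lam).eval (lam : ℂ) * (lam - z))
      = 1 / (lam * γ * (lam - z)) := by
  have hc : (decayCoeff N x w v lam : ℂ) ≠ 0 := by exact_mod_cast decayCoeff_ne_zero heig
  rw [eval_numeratorPoly_ofReal heig, eval_cofactorPoly_self,
    ← gamma_mul_decayCoeff_sq hN hx heig hγ]
  field_simp

end PointInteraction

end

open PointInteraction

/-- partial fraction expansion of the Weyl--Titchmarsh function:
for nonreal `z`, `M(z)/z = Σ_{λ ∈ σ} 1/(λ γ_λ² (λ - z))`. -/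
theorem stmt_7 (N : ℕ) (hN : 1 ≤ N) (x w v : ℕ → ℝ)
    (hx : ∀ i j, i < j → j < N → x i < x j)
    (hv : ∀ n, n < N → 0 ≤ v n) (hnd : ∀ n, n < N → 0 < |w n| + v n)
    (σ : Finset ℝ)
    (hσ : ∀ z : ℂ, Wron N x w v z = 0 ↔ ∃ lam ∈ σ, (lam : ℂ) = z)
    (γsq : ℝ → ℂ)
    (hγ : ∀ lam ∈ σ, ∀ f f' : ℝ → ℂ, IsSol N x w v (lam : ℂ) f f' →
      (∀ t : ℝ, x (N - 1) ≤ t → f t = Complex.exp (-(t : ℂ) / 2)) →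
      γsq lam = (∑ n ∈ Finset.range N, (w n : ℂ) * f (x n) ^ 2)
        + 2 * (lam : ℂ) * ∑ n ∈ Finset.range N, (v n : ℂ) * f (x n) ^ 2) :
    ∀ z : ℂ, z.im ≠ 0 →
      WeylM N x w v z / z
        = ∑ lam ∈ σ, 1 / ((lam : ℂ) * γsq lam * ((lam : ℂ) - z)) := by
  intro z hz
  have hN0 : N ≠ 0 := by omega
  have hxm : StrictMonoOn x (Set.Iio N) := fun i _ j hj hij => hx i j hij hj
  have hwv : ∀ n < N, w n ≠ 0 ∨ v n ≠ 0 := fun n hn => by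
    by_contra! h
    simpa [h.1, h.2] using hnd n hn
  have hroot : ∀ a, (wronskianPoly N x w v).IsRoot a ↔ ∃ lam ∈ σ, (lam : ℂ) = a := fun a => by
    rw [IsRoot, ← Wron_eq_eval hN0, hσ]
  have heig : ∀ lam ∈ σ, (rightData x w v lam (N - 1)).2 = -(rightData x w v lam (N - 1)).1 / 2 :=
    fun lam hlam => rightData_snd_eq_of_isRoot ((hroot lam).2 ⟨lam, hlam, rfl⟩)
  have hWz : (wronskianPoly N x w v).eval z ≠ 0 := fun h => by
    obtain ⟨lam, -, rfl⟩ := (hroot z).1 h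
    exact hz (Complex.ofReal_im lam)
  have hlam : ∀ lam ∈ σ, (lam : ℂ) ≠ 0 := fun lam hlam => by
    exact_mod_cast left_ne_zero_of_mul (mul_crossSum_pos hN0 hxm hv (heig lam hlam)).ne'
  have hfac := fun lam hlam => wronskianPoly_eq_mul_cofactorPoly hN0 (heig lam hlam)
  have hS := fun lam hlam => eval_cofactorPoly_self_ne_zero hN0 hxm hv (heig lam hlam)
  have hdeg := natDegree_le_card_of_factors (fun h => hWz (by rw [h, eval_zero]))
    Complex.ofReal_injective (fun a ha => (hroot a).1 ha) hfac hS
  rw [WeylM_eq_div hN0, eval_div_eval_div_eq_sum Complex.ofReal_injective hlam hfac hS hdeg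
    ((natDegree_numeratorPoly_le hN0 hxm hwv).trans hdeg) eval_numeratorPoly_zero
    (fun h => hz (by simp [h])) hWz]
  exact Finset.sum_congr rfl fun lam hlam =>
    eval_numeratorPoly_div_eq hN0 hxm (heig lam hlam) (hγ lam hlam) z
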